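/- Let Q > 0, ω > 0, x > 0, y > 0 and ℓ ∈ ℕ, and let a₀, a₁, a₂ be the associated cubic coefficients of the extremal Reissner–Nordström effective potential. Then there is exactly one r > 0 with r³ + a₂r² + a₁r + a₀ = 0; consequently the derivative of the effective potential vanishes at exactly one point of (0,∞). -/

import Mathlib

open Real

/-- The effective radial potential of a charged massive scalar in the extremal
Reissner–Nordström background. -/
noncomputable def Vrn (Q ω x y : ℝ) (ℓ : ℕ) (r : ℝ) : ℝ :=
  (1 + x)^2 * ω^2 + 4*Q*ω^2*(x^2 + 2*x + y)/r
    + ((ℓ : ℝ)*((ℓ : ℝ) + 1) + 4*Q^2*ω^2*(x^2 + 2*x - (y - 4)*y))/r^2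
    - 16*Q^3*(y - 1)*y*ω^2/r^3 - 16*Q^4*y^2*ω^2/r^4

/-- The cubic coefficient `a₂`. -/
noncomputable def a₂rn (Q ω x y : ℝ) (ℓ : ℕ) : ℝ :=
  ((ℓ : ℝ)*((ℓ : ℝ) + 1) + 4*Q^2*ω^2*(x^2 + 2*x - (y - 4)*y)) / (2*Q*ω^2*(x^2 + 2*x + y))

/-- The cubic coefficient `a₁`. -/
noncomputable def a₁rn (Q x y : ℝ) : ℝ := -12*Q^2*(y - 1)*y / (x^2 + 2*x + y)

/-- The cubic coefficient `a₀`. -/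
noncomputable def a₀rn (Q x y : ℝ) : ℝ := -16*Q^3*y^2 / (x^2 + 2*x + y)

/-!
`V'(r) = -(4Qω²(x² + 2x + y)/r⁵) · (r³ + a₂r² + a₁r + a₀)`, so both claims are about the
positive roots of this monic cubic `f`. Since `f(0) = a₀ < 0` and `f → ∞`, it has a positive
root. For uniqueness, of two positive roots `s, t`, either `a₁ ≤ 0` (when `y ≥ 1`) and
`s² f(t) - t² f(s) = (t - s)(s²t² - a₁st - a₀(s + t))`, or `a₂ > 0` (when `y < 1`) and
`s f(t) - t f(s) = (t - s)(st(s + t) + a₂st - a₀)`; in both cases the second factor is positive.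
-/

section MonicCubic

variable {b c d : ℝ}

theorem exists_pos_root_monic_cubic (hd : d < 0) :
    ∃ r, 0 < r ∧ r^3 + b*r^2 + c*r + d = 0 := by
  set f : ℝ → ℝ := fun r => r^3 + b*r^2 + c*r + d
  set R := 1 + |b| + |c| + |d|
  have hR : 1 ≤ R := by linarith [abs_nonneg b, abs_nonneg c, abs_nonneg d]
  have hfR : 0 ≤ f R := by
    have hR2 : R ≤ R^2 := by nlinarith
    calc 0 ≤ R^2 := sq_nonneg R
      _ = R^3 - |b| * R^2 - |c| * R^2 - |d| * R^2 := by ring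
      _ ≤ R^3 + b*R^2 + c*R + d := by
        nlinarith [neg_abs_le b, neg_abs_le c, neg_abs_le d, abs_nonneg c, abs_nonneg d]
  have hcont : ContinuousOn f (Set.Icc 0 R) := by fun_prop
  obtain ⟨r, hr, hfr⟩ :=
    intermediate_value_Icc (by linarith) hcont ⟨by simp [f]; linarith, hfR⟩
  refine ⟨r, hr.1.lt_of_ne ?_, hfr⟩
  rintro rfl
  exact hd.ne (by simpa [f] using hfr)

theorem monic_cubic_pos_root_unique (hd : d < 0) (hbc : c ≤ 0 ∨ 0 < b) {s t : ℝ}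
    (hs : 0 < s) (ht : 0 < t) (hfs : s^3 + b*s^2 + c*s + d = 0)
    (hft : t^3 + b*t^2 + c*t + d = 0) : s = t := by
  have hst := mul_pos hs ht
  suffices ∃ P, 0 < P ∧ (t - s) * P = 0 by
    obtain ⟨P, hP, h⟩ := this
    linarith [(mul_eq_zero.1 h).resolve_right hP.ne']
  rcases hbc with hc | hb
  · refine ⟨s^2*t^2 - c*(s*t) - d*(s + t), ?_, by linear_combination s^2 * hft - t^2 * hfs⟩
    nlinarith [mul_pos hst hst, mul_nonneg (neg_nonneg.2 hc) hst.le,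
      mul_pos (neg_pos.2 hd) (add_pos hs ht)]
  · refine ⟨s*t*(s + t) + b*(s*t) - d, ?_, by linear_combination s * hft - t * hfs⟩
    nlinarith [mul_pos hst (add_pos hs ht), mul_pos hb hst]

theorem existsUnique_pos_root_monic_cubic (hd : d < 0) (hbc : c ≤ 0 ∨ 0 < b) :
    ∃! r, 0 < r ∧ r^3 + b*r^2 + c*r + d = 0 := by
  obtain ⟨r, hr, hfr⟩ := exists_pos_root_monic_cubic (b := b) (c := c) hd
  exact ⟨r, ⟨hr, hfr⟩, fun s ⟨hs, hfs⟩ => monic_cubic_pos_root_unique hd hbc hs hr hfs hfr⟩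

end MonicCubic

theorem hasDerivAt_inverse_quartic (k A B C D : ℝ) {r : ℝ} (hr : r ≠ 0) :
    HasDerivAt (fun r => k + A/r + B/r^2 + C/r^3 + D/r^4)
      (-(A*r^3 + 2*B*r^2 + 3*C*r + 4*D)/r^5) r := by
  have h := (((((hasDerivAt_const r k).add ((hasDerivAt_const r A).div (hasDerivAt_id' r) hr)).add
    ((hasDerivAt_const r B).div (hasDerivAt_pow 2 r) (pow_ne_zero 2 hr))).add
    ((hasDerivAt_const r C).div (hasDerivAt_pow 3 r) (pow_ne_zero 3 hr))).add
    ((hasDerivAt_const r D).div (hasDerivAt_pow 4 r) (pow_ne_zero 4 hr)))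
  refine h.congr_deriv ?_
  field_simp
  ring

section Potential

variable {Q ω x y : ℝ} {ℓ : ℕ}

theorem hasDerivAt_Vrn (hQ : Q ≠ 0) (hω : ω ≠ 0) (hA : x^2 + 2*x + y ≠ 0) {r : ℝ}
    (hr : r ≠ 0) :
    HasDerivAt (Vrn Q ω x y ℓ) (-(4*Q*ω^2*(x^2 + 2*x + y))/r^5 *
      (r^3 + a₂rn Q ω x y ℓ * r^2 + a₁rn Q x y * r + a₀rn Q x y)) r := by
  convert hasDerivAt_inverse_quartic ((1 + x)^2 * ω^2) (4*Q*ω^2*(x^2 + 2*x + y))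
    ((ℓ : ℝ)*((ℓ : ℝ) + 1) + 4*Q^2*ω^2*(x^2 + 2*x - (y - 4)*y))
    (-16*Q^3*(y - 1)*y*ω^2) (-16*Q^4*y^2*ω^2) hr using 1
  · funext r
    simp only [Vrn]
    ring
  · simp only [a₂rn, a₁rn, a₀rn]
    generalize x^2 + 2*x + y = A at *
    field_simp
    ring

theorem deriv_Vrn_eq_zero_iff (hQ : Q ≠ 0) (hω : ω ≠ 0) (hA : x^2 + 2*x + y ≠ 0) {r : ℝ}
    (hr : r ≠ 0) :
    deriv (Vrn Q ω x y ℓ) r = 0 ↔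
      r^3 + a₂rn Q ω x y ℓ * r^2 + a₁rn Q x y * r + a₀rn Q x y = 0 := by
  rw [(hasDerivAt_Vrn hQ hω hA hr).deriv, mul_eq_zero, or_iff_right]
  simp [hQ, hω, hA, hr]

theorem a₀rn_neg (hQ : 0 < Q) (hx : 0 ≤ x) (hy : 0 < y) : a₀rn Q x y < 0 := by
  unfold a₀rn
  apply div_neg_of_neg_of_pos _ (by positivity)
  have : 0 < Q^3 * y^2 := by positivity
  linarith

theorem a₁rn_nonpos (hx : 0 ≤ x) (hy : 1 ≤ y) : a₁rn Q x y ≤ 0 := by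
  unfold a₁rn
  apply div_nonpos_of_nonpos_of_nonneg _ (by positivity)
  have : 0 ≤ Q^2 * (y - 1) * y := by
    have := sub_nonneg.2 hy
    positivity
  linarith

theorem a₂rn_pos (hQ : 0 < Q) (hω : 0 < ω) (hx : 0 ≤ x) (hy : 0 < y) (hy4 : y < 4) :
    0 < a₂rn Q ω x y ℓ := by
  unfold a₂rn
  apply div_pos _ (by positivity)
  have : 0 < x^2 + 2*x - (y - 4)*y := by nlinarith
  positivity

end Potential

/-- The associated cubic has exactly one positive root; consequently the derivative of
the extremal RN effective potential vanishes at exactly one point of `(0,∞)`. -/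
theorem stmt_6 (Q ω x y : ℝ) (ℓ : ℕ) (hQ : 0 < Q) (hω : 0 < ω)
    (hx : 0 < x) (hy : 0 < y) :
    (∃! r : ℝ, 0 < r ∧
        r^3 + a₂rn Q ω x y ℓ * r^2 + a₁rn Q x y * r + a₀rn Q x y = 0) ∧
      (∃! r : ℝ, 0 < r ∧ deriv (Vrn Q ω x y ℓ) r = 0) := by
  have hcubic := existsUnique_pos_root_monic_cubic (a₀rn_neg hQ hx.le hy)
    ((le_or_gt 1 y).imp (a₁rn_nonpos (Q := Q) hx.le) fun hy1 =>
      a₂rn_pos (ℓ := ℓ) hQ hω hx.le hy (by linarith))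
  have hA : x^2 + 2*x + y ≠ 0 := by positivity
  refine ⟨hcubic, (existsUnique_congr fun r => ?_).2 hcubic⟩
  exact and_congr_right fun hr => deriv_Vrn_eq_zero_iff hQ.ne' hω.ne' hA hr.ne'
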